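/- Let S_1, …, S_n be a row isometry on a complex Hilbert space H, let N ⊆ H be a closed subspace that is coinvariant for each S_j, and let P be the orthogonal projection onto N. Assume the compressions U_j = P S_j|_N form a spherical unitary on N (pairwise commuting normal operators with ∑_{j=1}^n U_j U_j* = I_N). If Y is a bounded operator on H commuting with every S_j, then the operator A = P Y P satisfies ∑_{j=1}^n (P S_j P) A (P S_j* P) = A; that is, the compression of Y to N satisfies ∑_{j=1}^n U_j (P Y|_N) U_j* = P Y|_N. -/

import Mathlib

/-!
As `S` is a row isometry, `E = ∑ Sⱼ Sⱼ*` is a projection. Coinvariance of `N` gives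
`P Sⱼ* P = Sⱼ* P`, so `P Sⱼ P Sⱼ* P = P Sⱼ Sⱼ* P` and the spherical-unitary identity
`∑ Uⱼ Uⱼ* = I_N`, dilated back to `H`, reads `P E P = P`. For projections this forces
`E P = P`, since `(P - E P)* (P - E P) = P - P E P = 0`. Since `Y` commutes with each `Sⱼ`,
`∑ (P Sⱼ P)(P Y P)(P Sⱼ* P) = P Y E P = P Y P`.
-/

open ContinuousLinearMap

def IsRowIsometry {R ι : Type*} [Semiring R] [Star R] [DecidableEq ι] (S : ι → R) : Prop :=
  ∀ i j, star (S i) * S j = if i = j then 1 else 0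

theorem IsRowIsometry.isStarProjection_sum_mul_star {R ι : Type*} [Semiring R] [StarRing R]
    [Fintype ι] [DecidableEq ι] {S : ι → R} (hS : IsRowIsometry S) :
    IsStarProjection (∑ j, S j * star (S j)) := by
  refine ⟨?_, ?_⟩
  · have hterm : ∀ i j, S i * star (S i) * (S j * star (S j))
        = if i = j then S i * star (S j) else 0 := by
      intro i j
      rw [mul_assoc, ← mul_assoc (star (S i)), hS i j]
      split_ifs <;> simp
    simp only [IsIdempotentElem, Finset.sum_mul_sum, hterm, Finset.sum_ite_eq, Finset.mem_univ,
      if_true]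
  · simp [IsSelfAdjoint, star_sum]

theorem IsStarProjection.mul_eq_of_mul_mul_eq {R : Type*} [NonUnitalNormedRing R] [StarRing R]
    [CStarRing R] {p q : R} (hp : IsStarProjection p) (hq : IsStarProjection q)
    (h : p * q * p = p) : q * p = p := by
  have hp2 : p * p = p := hp.isIdempotentElem
  have hq2 : q * q = q := hq.isIdempotentElem
  have : star (p - q * p) * (p - q * p) = 0 := by
    rw [star_sub, star_mul, hp.isSelfAdjoint.star_eq, hq.isSelfAdjoint.star_eq]
    calc (p - p * q) * (p - q * p)
        = p * p - p * q * p - p * q * p + p * (q * q) * p := by noncomm_ring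
      _ = 0 := by rw [hp2, hq2, h, sub_self, zero_sub, neg_add_cancel]
  exact (sub_eq_zero.mp ((CStarRing.star_mul_self_eq_zero_iff _).mp this)).symm

theorem IsStarProjection.mul_mul_eq_mul_of_mul_star_mul_eq {R : Type*} [Semigroup R] [StarMul R]
    {p s : R} (hp : IsStarProjection p) (hs : p * star s * p = star s * p) :
    p * s * p = p * s := by
  simpa [star_mul, hp.isSelfAdjoint.star_eq, mul_assoc] using congrArg star hs

theorem mul_mul_mul_star_mul_of_mul_star_mul_eq {R : Type*} [Semigroup R] [Star R] {p s : R}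
    (hs : p * star s * p = star s * p) : p * s * p * star s * p = p * (s * star s) * p := by
  calc p * s * p * star s * p = p * s * (p * star s * p) := by simp only [mul_assoc]
    _ = p * (s * star s) * p := by rw [hs]; simp only [mul_assoc]

theorem IsStarProjection.compress_mul_compress_mul_compress_star {R : Type*} [Semigroup R]
    [StarMul R] {p s y : R} (hp : IsStarProjection p) (hs : p * star s * p = star s * p)
    (hy : y * s = s * y) :
    p * s * p * (p * y * p) * (p * star s * p) = p * y * (s * star s) * p := by
  have hp2 : p * p = p := hp.isIdempotentElem
  calc p * s * p * (p * y * p) * (p * star s * p)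
      = p * s * (p * p) * y * ((p * p) * star s * p) := by simp only [mul_assoc]
    _ = p * (s * y) * star s * p := by
        rw [hp2, hs, hp.mul_mul_eq_mul_of_mul_star_mul_eq hs]
        simp only [mul_assoc]
    _ = p * y * (s * star s) * p := by rw [← hy]; simp only [mul_assoc]

namespace Submodule

variable {𝕜 H : Type*} [RCLike 𝕜] [NormedAddCommGroup H] [InnerProductSpace 𝕜 H]

theorem starProjection_mul_mul_starProjection_of_mapsTo (N : Submodule 𝕜 H)
    [N.HasOrthogonalProjection] {T : H →L[𝕜] H} (hT : ∀ x ∈ N, T x ∈ N) :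
    N.starProjection * T * N.starProjection = T * N.starProjection := by
  ext x
  exact N.starProjection_eq_self_iff.mpr (hT _ (N.starProjection_apply_mem x))

theorem star_orthogonalProjectionOnto_comp_comp_subtypeL [CompleteSpace H] (N : Submodule 𝕜 H)
    [CompleteSpace N] (T : H →L[𝕜] H) :
    star (N.orthogonalProjectionOnto ∘L T ∘L N.subtypeL)
      = N.orthogonalProjectionOnto ∘L star T ∘L N.subtypeL := by
  rw [star_eq_adjoint, adjoint_comp, adjoint_comp, adjoint_subtypeL,
    adjoint_orthogonalProjectionOnto, comp_assoc]
  rfl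

theorem subtypeL_comp_compression_mul_star_comp_orthogonalProjectionOnto [CompleteSpace H]
    (N : Submodule 𝕜 H) [CompleteSpace N] (T : H →L[𝕜] H) :
    N.subtypeL ∘L ((N.orthogonalProjectionOnto ∘L T ∘L N.subtypeL)
        * star (N.orthogonalProjectionOnto ∘L T ∘L N.subtypeL)) ∘L N.orthogonalProjectionOnto
      = N.starProjection * T * N.starProjection * star T * N.starProjection := by
  rw [star_orthogonalProjectionOnto_comp_comp_subtypeL]
  rfl

end Submodule

theorem compression_is_harmonic_for_spherical_unitary_general
    {H : Type*} [NormedAddCommGroup H] [InnerProductSpace ℂ H] [CompleteSpace H]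
    {n : ℕ} (S : Fin n → H →L[ℂ] H)
    (hrow : ∀ i j, star (S i) * S j = if i = j then 1 else 0)
    (N : Submodule ℂ H) [CompleteSpace N]
    (hcoinv : ∀ j, ∀ x ∈ N, adjoint (S j) x ∈ N)
    -- the compressions `Uⱼ = P_N Sⱼ|_N` :
    (U : Fin n → N →L[ℂ] N)
    (hU : ∀ j, U j = N.orthogonalProjectionOnto ∘L (S j) ∘L N.subtypeL)
    -- `U` is a spherical unitary :
    (hUsum : ∑ j, U j * star (U j) = 1)
    (Y : H →L[ℂ] H)
    (hY : ∀ j, Y * S j = S j * Y) :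
    let P : H →L[ℂ] H := N.subtypeL ∘L N.orthogonalProjectionOnto
    ∑ j, (P ∘L S j ∘L P) ∘L (P ∘L Y ∘L P) ∘L (P ∘L star (S j) ∘L P)
      = P ∘L Y ∘L P := by
  intro P
  set E := ∑ j, S j * star (S j)
  have hP : IsStarProjection P := isStarProjection_starProjection
  have hE : IsStarProjection E := IsRowIsometry.isStarProjection_sum_mul_star hrow
  have hco : ∀ j, P * star (S j) * P = star (S j) * P := fun j =>
    N.starProjection_mul_mul_starProjection_of_mapsTo (hcoinv j)
  have hPEP : P * E * P = P := by
    calc P * E * P = ∑ j, P * S j * P * star (S j) * P := by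
          simp only [E, Finset.mul_sum, Finset.sum_mul,
            mul_mul_mul_star_mul_of_mul_star_mul_eq (hco _)]
      _ = N.subtypeL ∘L (∑ j, U j * star (U j)) ∘L N.orthogonalProjectionOnto := by
          simp only [finsetSum_comp, comp_finsetSum, hU,
            N.subtypeL_comp_compression_mul_star_comp_orthogonalProjectionOnto]
          rfl
      _ = P := by rw [hUsum]; rfl
  have hEP : E * P = P := hP.mul_eq_of_mul_mul_eq hE hPEP
  calc ∑ j, P * S j * P * (P * Y * P) * (P * star (S j) * P)
      = ∑ j, P * Y * (S j * star (S j)) * P := by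
        simp only [hP.compress_mul_compress_mul_compress_star (hco _) (hY _)]
    _ = P * Y * P := by rw [← Finset.sum_mul, ← Finset.mul_sum, mul_assoc, hEP]

open ContinuousLinearMap in
/-- From the proof of Lemma 3.3 of Davidson–Le: if `S` is a row isometry, `N` a coinvariant
closed subspace whose compressions `Uⱼ = P Sⱼ|_N` form a spherical unitary, and `Y` commutes
with every `Sⱼ`, then the compression `A = P Y P` satisfies `∑ (P Sⱼ P) A (P Sⱼ* P) = A`,
i.e. `∑ Uⱼ (P Y|_N) Uⱼ* = P Y|_N`. -/
theorem compression_is_harmonic_for_spherical_unitary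
    {H : Type*} [NormedAddCommGroup H] [InnerProductSpace ℂ H] [CompleteSpace H]
    {n : ℕ} (S : Fin n → H →L[ℂ] H)
    (hrow : ∀ i j, star (S i) * S j = if i = j then 1 else 0)
    (N : Submodule ℂ H) [CompleteSpace N]
    (hcoinv : ∀ j, ∀ x ∈ N, adjoint (S j) x ∈ N)
    -- the compressions `Uⱼ = P_N Sⱼ|_N` :
    (U : Fin n → N →L[ℂ] N)
    (hU : ∀ j, U j = N.orthogonalProjectionOnto ∘L (S j) ∘L N.subtypeL)
    -- `U` is a spherical unitary :
    (hUcomm : ∀ i j, U i * U j = U j * U i)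
    (hUnormal : ∀ i, U i * star (U i) = star (U i) * U i)
    (hUsum : ∑ j, U j * star (U j) = 1)
    (Y : H →L[ℂ] H)
    (hY : ∀ j, Y * S j = S j * Y) :
    let P : H →L[ℂ] H := N.subtypeL ∘L N.orthogonalProjectionOnto
    ∑ j, (P ∘L S j ∘L P) ∘L (P ∘L Y ∘L P) ∘L (P ∘L star (S j) ∘L P)
      = P ∘L Y ∘L P :=
  compression_is_harmonic_for_spherical_unitary_general S hrow N hcoinv U hU hUsum Y hY
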